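/- arXiv:1705.11124 — 12 statements merged into one kernel-verified Lean document; each statement's English description precedes it below -/
import Mathlib

section
/- For ℓ > 2 and any K > 0, the set D^K ∪ {0} is not convex, where D^K := ⋃_{i=1}^ℓ D^{i,K}. Concretely, the vectors y with y_1 = 3K, y_i = −2 for i ≥ 2, and z with z_1 = −4, z_2 = 7K, z_i = −6 for i ≥ 3, both lie in D^K, but y + z ∉ D^K ∪ {0}. -/
/-- For ℓ > 2 the set D^K ∪ {0} is not convex; the concrete points y, z lie in D^K
but y + z does not lie in D^K ∪ {0}. -/
theorem stmt_3 (ℓ : ℕ) (hℓ : 2 < ℓ) (K : ℝ) (hK : 0 < K)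
    (DK : Set (Fin ℓ → ℝ))
    (hDK : DK = {y : Fin ℓ → ℝ | ∃ i : Fin ℓ,
        0 < y i ∧ ∀ j, j ≠ i → 0 < y i + K * y j})
    (y z : Fin ℓ → ℝ)
    (hy : y = fun i : Fin ℓ => if (i : ℕ) = 0 then 3 * K else -2)
    (hz : z = fun i : Fin ℓ => if (i : ℕ) = 0 then -4 else if (i : ℕ) = 1 then 7 * K else -6) :
    y ∈ DK ∧ z ∈ DK ∧ y + z ∉ DK ∪ {0} ∧ ¬ Convex ℝ (DK ∪ {0}) := by
  have i0 : Fin ℓ := ⟨0, by omega⟩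
  have hymem : y ∈ DK := by
    subst hDK hy
    refine ⟨⟨0, by omega⟩, ?_, fun j hj => ?_⟩
    · simp; positivity
    · have hj0 : (j : ℕ) ≠ 0 := by
        simpa [Fin.ext_iff] using hj
      simp [hj0]
      linarith
  have hzmem : z ∈ DK := by
    subst hDK hz
    refine ⟨⟨1, by omega⟩, ?_, fun j hj => ?_⟩
    · simp; positivity
    · have hj1 : (j : ℕ) ≠ 1 := by
        simpa [Fin.ext_iff] using hj
      rcases eq_or_ne (j : ℕ) 0 with h0 | h0 <;> simp [hj1, h0] <;> linarith
  have key : ∀ c : ℝ, 0 < c → c • (y + z) ∉ DK ∪ {0} := by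
    intro c hc hmem
    have hval : ∀ i : Fin ℓ, (c • (y + z)) i =
        c * ((if (i : ℕ) = 0 then 3 * K else -2) +
          (if (i : ℕ) = 0 then -4 else if (i : ℕ) = 1 then 7 * K else -6)) := by
      intro i; simp [hy, hz]
    have hj2 : ((⟨2, by omega⟩ : Fin ℓ) : ℕ) = 2 := rfl
    rcases hmem with hmem | hmem
    · rw [hDK] at hmem
      obtain ⟨i, hi, hall⟩ := hmem
      rw [hval] at hi
      rcases Nat.lt_or_ge (i : ℕ) 2 with h | h
      · have hne : (⟨2, by omega⟩ : Fin ℓ) ≠ i := by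
          simp only [ne_eq, Fin.ext_iff, hj2]; omega
        have h2 := hall ⟨2, by omega⟩ hne
        rw [hval, hval] at h2
        have h01 : (i : ℕ) = 0 ∨ (i : ℕ) = 1 := by omega
        rcases h01 with h0 | h0 <;> simp [h0, hj2] at h2 hi <;> nlinarith
      · have h0 : (i : ℕ) ≠ 0 := by omega
        have h1 : (i : ℕ) ≠ 1 := by omega
        simp [h0, h1] at hi
        nlinarith
    · have h2 := congrFun hmem ⟨2, by omega⟩
      rw [hval] at h2
      simp [hj2] at h2
      rcases h2 with h | h <;> linarith
  refine ⟨hymem, hzmem, ?_, ?_⟩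
  · have := key 1 one_pos
    simpa using this
  · intro hconv
    have hmid := hconv (Set.mem_union_left _ hymem) (Set.mem_union_left _ hzmem)
      (by norm_num : (0:ℝ) ≤ 1/2) (by norm_num : (0:ℝ) ≤ 1/2) (by norm_num)
    have : (1/2 : ℝ) • (y + z) ∈ DK ∪ {0} := by
      rw [smul_add]; exact hmid
    exact key (1/2) (by norm_num) this
end

section
/- For ℓ = 2, the set D^K ∪ {0} is convex if and only if K ≥ 1. -/
private lemma key_4 (K : ℝ) (hK : 0 < K) (hK1 : 1 ≤ K) (p : Fin 2 → ℝ)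
    (hp : (0 < p 0 ∧ 0 < p 0 + K * p 1) ∨ (0 < p 1 ∧ 0 < p 1 + K * p 0)) :
    0 < p 0 + K * p 1 ∧ 0 < p 1 + K * p 0 := by
  rcases hp with ⟨h1, h2⟩ | ⟨h1, h2⟩
  · refine ⟨h2, ?_⟩
    nlinarith [mul_nonneg (mul_nonneg (sub_nonneg.2 hK1) (by linarith : (0:ℝ) ≤ K + 1)) h1.le]
  · refine ⟨?_, h2⟩
    nlinarith [mul_nonneg (mul_nonneg (sub_nonneg.2 hK1) (by linarith : (0:ℝ) ≤ K + 1)) h1.le]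

/-- For ℓ = 2, D^K ∪ {0} is convex iff K ≥ 1. -/
theorem stmt_4 (K : ℝ) (hK : 0 < K) :
    Convex ℝ (({y : Fin 2 → ℝ | 0 < y 0 ∧ 0 < y 0 + K * y 1} ∪
        {y : Fin 2 → ℝ | 0 < y 1 ∧ 0 < y 1 + K * y 0}) ∪ {0}) ↔ 1 ≤ K := by
  constructor
  · intro hC
    by_contra hK1
    push_neg at hK1
    set x : Fin 2 → ℝ := ![K, -(1+K)/2] with hxdef
    set y : Fin 2 → ℝ := ![-(1+K)/2, K] with hydef
    have hx : x ∈ (({y : Fin 2 → ℝ | 0 < y 0 ∧ 0 < y 0 + K * y 1} ∪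
        {y : Fin 2 → ℝ | 0 < y 1 ∧ 0 < y 1 + K * y 0}) ∪ {0}) := by
      left; left
      constructor <;> simp [hxdef] <;> nlinarith
    have hy : y ∈ (({y : Fin 2 → ℝ | 0 < y 0 ∧ 0 < y 0 + K * y 1} ∪
        {y : Fin 2 → ℝ | 0 < y 1 ∧ 0 < y 1 + K * y 0}) ∪ {0}) := by
      left; right
      constructor <;> simp [hydef] <;> nlinarith
    have hm := hC hx hy (by norm_num : (0:ℝ) ≤ 1/2) (by norm_num : (0:ℝ) ≤ 1/2)
      (by norm_num)
    have hm0 : ((1/2 : ℝ) • x + (1/2 : ℝ) • y) 0 = (K - 1) / 4 := by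
      simp [hxdef, hydef]; ring
    have hm1 : ((1/2 : ℝ) • x + (1/2 : ℝ) • y) 1 = (K - 1) / 4 := by
      simp [hxdef, hydef]; ring
    rcases hm with (⟨h1, _⟩ | ⟨h1, _⟩) | h
    · rw [hm0] at h1; linarith
    · rw [hm1] at h1; linarith
    · have : ((1/2 : ℝ) • x + (1/2 : ℝ) • y) 0 = 0 := by
        rw [Set.mem_singleton_iff] at h; rw [h]; rfl
      rw [hm0] at this; linarith
  · intro hK1
    have hset : (({y : Fin 2 → ℝ | 0 < y 0 ∧ 0 < y 0 + K * y 1} ∪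
        {y : Fin 2 → ℝ | 0 < y 1 ∧ 0 < y 1 + K * y 0}) ∪ {0}) =
        {y : Fin 2 → ℝ | 0 < y 0 + K * y 1 ∧ 0 < y 1 + K * y 0} ∪ {0} := by
      ext p
      constructor
      · rintro (hp | hp)
        · exact Or.inl (key_4 K hK hK1 p hp)
        · exact Or.inr hp
      · rintro (⟨h1, h2⟩ | hp)
        · left
          have hsum : 0 < p 0 + p 1 := by nlinarith
          by_cases h0 : 0 < p 0
          · left; exact ⟨h0, h1⟩
          · right; exact ⟨by push_neg at h0; linarith, h2⟩
        · exact Or.inr hp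
    rw [hset]
    intro x hx y hy a b ha hb hab
    rcases eq_or_lt_of_le ha with ha0 | ha
    · have hb1 : b = 1 := by linarith
      simp [← ha0, hb1]
      simpa using hy
    rcases eq_or_lt_of_le hb with hb0 | hb
    · have ha1 : a = 1 := by linarith
      simp [← hb0, ha1]
      simpa using hx
    have hz0 : (a • x + b • y) 0 = a * x 0 + b * y 0 := by simp
    have hz1 : (a • x + b • y) 1 = a * x 1 + b * y 1 := by simp
    rcases hx with ⟨hx1, hx2⟩ | hx0 <;> rcases hy with ⟨hy1, hy2⟩ | hy0
    · left
      constructor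
      · rw [hz0, hz1]
        have := add_pos (mul_pos ha hx1) (mul_pos hb hy1)
        nlinarith
      · rw [hz0, hz1]
        have := add_pos (mul_pos ha hx2) (mul_pos hb hy2)
        nlinarith
    · rw [Set.mem_singleton_iff] at hy0
      left
      have e0 : y 0 = 0 := by rw [hy0]; rfl
      have e1 : y 1 = 0 := by rw [hy0]; rfl
      constructor
      · rw [hz0, hz1, e0, e1]
        have := mul_pos ha hx1; nlinarith
      · rw [hz0, hz1, e0, e1]
        have := mul_pos ha hx2; nlinarith
    · rw [Set.mem_singleton_iff] at hx0
      left
      have e0 : x 0 = 0 := by rw [hx0]; rfl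
      have e1 : x 1 = 0 := by rw [hx0]; rfl
      constructor
      · rw [hz0, hz1, e0, e1]
        have := mul_pos hb hy1; nlinarith
      · rw [hz0, hz1, e0, e1]
        have := mul_pos hb hy2; nlinarith
    · rw [Set.mem_singleton_iff] at hx0 hy0
      right
      rw [Set.mem_singleton_iff, hx0, hy0]
      simp
end

section
/- A point y⁰ ∈ F is properly efficient according to Geoffrion if and only if there exists K > 0 such that y⁰ ∈ Min(F, D^K), i.e., F ∩ (y⁰ − D^K) = ∅. -/
/-- y⁰ ∈ F is Geoffrion-properly efficient iff there is K > 0 with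
F ∩ (y⁰ − D^K) = ∅. -/
theorem stmt_7 (ℓ : ℕ) (hℓ : 2 ≤ ℓ) (F : Set (Fin ℓ → ℝ)) (y0 : Fin ℓ → ℝ)
    (hy0 : y0 ∈ F) :
    (∃ K : ℝ, 0 < K ∧ ∀ y ∈ F, ∀ i : Fin ℓ, y i < y0 i →
        ∃ j, j ≠ i ∧ y0 i - y i ≤ K * (y j - y0 j)) ↔
    (∃ K : ℝ, 0 < K ∧
        F ∩ {y : Fin ℓ → ℝ | ∃ i : Fin ℓ,
            0 < (y0 - y) i ∧ ∀ j, j ≠ i → 0 < (y0 - y) i + K * (y0 - y) j} = ∅) := by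
  constructor
  · rintro ⟨K, hK, h⟩
    refine ⟨K, hK, ?_⟩
    ext y
    simp only [Set.mem_inter_iff, Set.mem_setOf_eq, Set.mem_empty_iff_false, iff_false,
      Pi.sub_apply, not_and, not_exists]
    intro hyF i hi hj
    obtain ⟨j, hji, hle⟩ := h y hyF i (by linarith)
    have := hj j hji
    nlinarith
  · rintro ⟨K, hK, h⟩
    refine ⟨K, hK, ?_⟩
    intro y hyF i hi
    by_contra hc
    push_neg at hc
    have hmem : y ∈ F ∩ {y : Fin ℓ → ℝ | ∃ i : Fin ℓ,
        0 < (y0 - y) i ∧ ∀ j, j ≠ i → 0 < (y0 - y) i + K * (y0 - y) j} := by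
      refine ⟨hyF, i, by simpa using by linarith, fun j hj => ?_⟩
      have := hc j hj
      simp only [Pi.sub_apply]
      nlinarith
    rw [h] at hmem
    exact hmem
end

section
/- For every convex cone H ⊆ ℝ^ℓ with ℝ^ℓ_+ \ {0} ⊆ int H, there exists K > 0 with D^K ⊆ int H. -/
/-! Every basis vector `eᵢ` lies in `int H`, and since there are finitely many of them a single
radius `ε` works for all. For `y ∈ D^{i,K}` with `K = 2/ε`, split `y = P + R` where
`P = nonnegPart i y` keeps `yᵢ/2` and the positive off-diagonal entries of `y`, so `P ≥ 0`,
`P ≠ 0` and `P ∈ int H`. The rest `R` has `Rᵢ = yᵢ/2` and entries `min yⱼ 0 > -yᵢ/K`, so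
`(2/yᵢ) • R` is `ε`-close to `eᵢ` and `R ∈ H`. Finally `int H + H ⊆ int H` for a convex cone. -/

open Set Metric

section ConvexCone

variable {E : Type*} [AddCommGroup E] [Module ℝ E] {H : Set E}

theorem add_mem_of_convex_of_smul_mem (hconv : Convex ℝ H)
    (hcone : ∀ l : ℝ, 0 ≤ l → ∀ c ∈ H, l • c ∈ H) {a b : E} (ha : a ∈ H) (hb : b ∈ H) :
    a + b ∈ H := by
  have hmid : (1 / 2 : ℝ) • a + (1 / 2 : ℝ) • b ∈ H :=
    hconv ha hb (by norm_num) (by norm_num) (by norm_num)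
  have h := hcone 2 zero_le_two _ hmid
  rwa [smul_add, smul_smul, smul_smul, mul_one_div_cancel two_ne_zero, one_smul, one_smul] at h

theorem add_mem_interior_of_convex_of_smul_mem [TopologicalSpace E] [IsTopologicalAddGroup E]
    (hconv : Convex ℝ H) (hcone : ∀ l : ℝ, 0 ≤ l → ∀ c ∈ H, l • c ∈ H) {a b : E}
    (ha : a ∈ interior H) (hb : b ∈ H) : a + b ∈ interior H := by
  refine interior_maximal ?_ isOpen_interior.add_right (add_mem_add ha hb)
  rintro _ ⟨x, hx, z, hz, rfl⟩
  exact add_mem_of_convex_of_smul_mem hconv hcone (interior_subset hx) hz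

end ConvexCone

theorem IsOpen.exists_pos_forall_ball_subset {ι X : Type*} [Finite ι] [PseudoMetricSpace X]
    {U : Set X} (hU : IsOpen U) {x : ι → X} (hx : ∀ i, x i ∈ U) :
    ∃ ε > 0, ∀ i, ball (x i) ε ⊆ U := by
  obtain ⟨ε, hε, hsub⟩ :=
    (finite_range x).isCompact.exists_thickening_subset_open hU (range_subset_iff.2 hx)
  exact ⟨ε, hε, fun i => (ball_subset_thickening (mem_range_self i) ε).trans hsub⟩

section Orthant

variable {ι : Type*} [DecidableEq ι]

theorem single_one_mem_of_orthant_subset {S : Set (ι → ℝ)}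
    (hS : {y : ι → ℝ | ∀ j, 0 ≤ y j} \ {0} ⊆ S) (i : ι) : Pi.single i 1 ∈ S :=
  hS ⟨fun j => (Pi.single_nonneg.2 zero_le_one : (0 : ι → ℝ) ≤ Pi.single i 1) j, by simp⟩

noncomputable def nonnegPart (i : ι) (y : ι → ℝ) : ι → ℝ :=
  fun j => if j = i then y i / 2 else max (y j) 0

theorem nonnegPart_mem_orthant_diff_zero {i : ι} {y : ι → ℝ} (hyi : 0 < y i) :
    nonnegPart i y ∈ {y : ι → ℝ | ∀ j, 0 ≤ y j} \ {0} := by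
  refine ⟨fun j => ?_, fun h0 => ?_⟩
  · by_cases hji : j = i
    · simp only [nonnegPart, if_pos hji]; positivity
    · simp only [nonnegPart, if_neg hji]; exact le_max_right _ _
  · have := congrFun (mem_singleton_iff.1 h0) i
    simp only [nonnegPart, if_true, Pi.zero_apply] at this
    linarith

theorem smul_sub_nonnegPart_mem_ball [Fintype ι] {ε : ℝ} (hε : 0 < ε) {i : ι} {y : ι → ℝ}
    (hyi : 0 < y i) (hy : ∀ j, j ≠ i → 0 < y i + 2 / ε * y j) :
    (2 / y i) • (y - nonnegPart i y) ∈ ball (Pi.single i 1) ε := by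
  rw [mem_ball, dist_pi_lt_iff hε]
  intro j
  rw [Real.dist_eq]
  by_cases hji : j = i
  · subst hji
    have hzero : 2 / y j * (y j - y j / 2) - 1 = 0 := by field_simp; ring
    simpa [nonnegPart, hzero] using hε
  · have hneg : -(2 / y i * y j) < ε := by
      have := hy j hji
      rw [div_mul_eq_mul_div, ← neg_div, div_lt_iff₀ hyi]
      field_simp at this
      linarith
    simp only [nonnegPart, Pi.smul_apply, Pi.sub_apply, if_neg hji, Pi.single_eq_of_ne hji,
      smul_eq_mul, sub_zero]
    rcases le_total (y j) 0 with hyj | hyj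
    · rwa [max_eq_right hyj, sub_zero,
        abs_of_nonpos (mul_nonpos_of_nonneg_of_nonpos (by positivity) hyj)]
    · simpa [max_eq_left hyj] using hε

theorem mem_interior_of_ball_single_subset [Fintype ι] {H : Set (ι → ℝ)} (hconv : Convex ℝ H)
    (hcone : ∀ l : ℝ, 0 ≤ l → ∀ c ∈ H, l • c ∈ H)
    (hint : {y : ι → ℝ | ∀ j, 0 ≤ y j} \ {0} ⊆ interior H) {ε : ℝ} (hε : 0 < ε) {i : ι}
    (hball : ball (Pi.single i 1) ε ⊆ H) {y : ι → ℝ} (hyi : 0 < y i)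
    (hy : ∀ j, j ≠ i → 0 < y i + 2 / ε * y j) : y ∈ interior H := by
  have hP : nonnegPart i y ∈ interior H := hint (nonnegPart_mem_orthant_diff_zero hyi)
  have hR : y - nonnegPart i y ∈ H := by
    have := hcone (y i / 2) (by positivity) _ (hball (smul_sub_nonnegPart_mem_ball hε hyi hy))
    rwa [smul_smul, div_mul_div_cancel₀ two_ne_zero, div_self hyi.ne', one_smul] at this
  simpa using add_mem_interior_of_convex_of_smul_mem hconv hcone hP hR

end Orthant

theorem stmt_8_general (ℓ : ℕ) (H : Set (Fin ℓ → ℝ))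
    (hconv : Convex ℝ H) (hcone : ∀ l : ℝ, 0 ≤ l → ∀ c ∈ H, l • c ∈ H)
    (hint : {y : Fin ℓ → ℝ | ∀ j, 0 ≤ y j} \ {0} ⊆ interior H) :
    ∃ K : ℝ, 0 < K ∧
      {y : Fin ℓ → ℝ | ∃ i : Fin ℓ, 0 < y i ∧ ∀ j, j ≠ i → 0 < y i + K * y j} ⊆
        interior H := by
  obtain ⟨ε, hε, hball⟩ :=
    isOpen_interior.exists_pos_forall_ball_subset (single_one_mem_of_orthant_subset hint)
  refine ⟨2 / ε, by positivity, ?_⟩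
  rintro y ⟨i, hyi, hy⟩
  exact mem_interior_of_ball_single_subset hconv hcone hint hε
    ((hball i).trans interior_subset) hyi hy

/-- For every convex cone H with ℝ^ℓ_+ \ {0} ⊆ int H there is K > 0 with D^K ⊆ int H. -/
theorem stmt_8 (ℓ : ℕ) (hℓ : 2 ≤ ℓ) (H : Set (Fin ℓ → ℝ))
    (hconv : Convex ℝ H) (hcone : ∀ l : ℝ, 0 ≤ l → ∀ c ∈ H, l • c ∈ H)
    (hint : {y : Fin ℓ → ℝ | ∀ j, 0 ≤ y j} \ {0} ⊆ interior H) :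
    ∃ K : ℝ, 0 < K ∧
      {y : Fin ℓ → ℝ | ∃ i : Fin ℓ, 0 < y i ∧ ∀ j, j ≠ i → 0 < y i + K * y j} ⊆
        interior H :=
  stmt_8_general ℓ H hconv hcone hint
end

section
/- For 0 < p < 1 there exist p̄ > 1 and p̃ > 1 with C^{p̃} ⊆ C^p ⊆ C^{p̄}; specifically one may take p̄ = (ℓ−1)/(p+ℓ−2) and p̃ = (ℓ−1−(ℓ−2)p)/p. -/
open Finset

lemma erase_cond_aux (ℓ : ℕ) (hℓ : 2 ≤ ℓ) (q : ℝ) (y : Fin ℓ → ℝ)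
    (h : ∀ i, 0 ≤ q * y i + ((∑ j, y j) - y i)) (i : Fin ℓ) :
    0 ≤ (q - 1) * ((∑ j, y j) - y i) + ((ℓ : ℝ) - 1) * (∑ j, y j) := by
  have h0 : 0 ≤ ∑ j ∈ univ.erase i, (q * y j + ((∑ k, y k) - y j)) :=
    Finset.sum_nonneg (fun j _ => h j)
  have hcard : (((univ.erase i).card : ℕ) : ℝ) = (ℓ : ℝ) - 1 := by
    rw [Finset.card_erase_of_mem (mem_univ i), card_univ, Fintype.card_fin]
    have h1 : 1 ≤ ℓ := le_trans one_le_two hℓ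
    push_cast [Nat.cast_sub h1]
    ring
  have h1 : ∑ j ∈ univ.erase i, (q * y j + ((∑ k, y k) - y j))
      = (q - 1) * ((∑ j, y j) - y i) + ((ℓ : ℝ) - 1) * (∑ j, y j) := by
    rw [Finset.sum_add_distrib, Finset.sum_sub_distrib, ← Finset.mul_sum,
      Finset.sum_const, Finset.sum_erase_eq_sub (mem_univ i), nsmul_eq_mul, hcard]
    ring
  rw [h1] at h0
  exact h0

/-- For 0 < p < 1 there exist p̄ > 1 and p̃ > 1 with C^p̃ ⊆ C^p ⊆ C^p̄;
one may take p̄ = (ℓ−1)/(p+ℓ−2) and p̃ = (ℓ−1−(ℓ−2)p)/p. -/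
theorem stmt_10 (ℓ : ℕ) (hℓ : 2 ≤ ℓ) (p : ℝ) (hp0 : 0 < p) (hp1 : p < 1)
    (C : ℝ → Set (Fin ℓ → ℝ))
    (hC : ∀ q : ℝ, C q =
      {y : Fin ℓ → ℝ | ∀ i : Fin ℓ, 0 ≤ q * y i + ∑ j ∈ Finset.univ.erase i, y j}) :
    ∃ p' p'' : ℝ, p' = ((ℓ : ℝ) - 1) / (p + (ℓ : ℝ) - 2) ∧
      p'' = ((ℓ : ℝ) - 1 - ((ℓ : ℝ) - 2) * p) / p ∧
      1 < p' ∧ 1 < p'' ∧ C p'' ⊆ C p ∧ C p ⊆ C p' := by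
  have hL : (2 : ℝ) ≤ (ℓ : ℝ) := by exact_mod_cast hℓ
  set L : ℝ := (ℓ : ℝ) with hLdef
  have hd : 0 < p + L - 2 := by linarith
  have hL1 : (0 : ℝ) < L - 1 := by linarith
  refine ⟨(L - 1) / (p + L - 2), (L - 1 - (L - 2) * p) / p, rfl, rfl, ?_, ?_, ?_, ?_⟩
  · rw [one_lt_div hd]; linarith
  · rw [one_lt_div hp0]
    nlinarith [mul_pos hL1 (show (0:ℝ) < 1 - p by linarith)]
  · -- C p'' ⊆ C p
    rw [hC, hC]
    intro y hy i
    simp only [Set.mem_setOf_eq] at hy ⊢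
    have hy' : ∀ j, 0 ≤ ((L - 1 - (L - 2) * p) / p) * y j + ((∑ k, y k) - y j) := by
      intro j
      have := hy j
      rwa [Finset.sum_erase_eq_sub (mem_univ j)] at this
    have key := erase_cond_aux ℓ hℓ _ y hy' i
    rw [Finset.sum_erase_eq_sub (mem_univ i)]
    have hid : p * y i + ((∑ j, y j) - y i)
        = (p / (L - 1)) * (((L - 1 - (L - 2) * p) / p - 1) * ((∑ j, y j) - y i)
            + (L - 1) * (∑ j, y j)) := by
      field_simp
      ring
    rw [hid]
    exact mul_nonneg (div_nonneg hp0.le hL1.le) key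
  · -- C p ⊆ C p'
    rw [hC, hC]
    intro y hy i
    simp only [Set.mem_setOf_eq] at hy ⊢
    have hy' : ∀ j, 0 ≤ p * y j + ((∑ k, y k) - y j) := by
      intro j
      have := hy j
      rwa [Finset.sum_erase_eq_sub (mem_univ j)] at this
    have key := erase_cond_aux ℓ hℓ p y hy' i
    rw [Finset.sum_erase_eq_sub (mem_univ i)]
    have hid : ((L - 1) / (p + L - 2)) * y i + ((∑ j, y j) - y i)
        = (1 / (p + L - 2)) * ((p - 1) * ((∑ j, y j) - y i)
            + (L - 1) * (∑ j, y j)) := by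
      field_simp
      ring
    rw [hid]
    exact mul_nonneg (by positivity) key
end

section
/- For every p̄ > 0, one has ℝ^ℓ_+ = ⋂_{p ≥ p̄} C^p and ℝ^ℓ_+ \ {0} = ⋂_{p ≥ p̄} int C^p. -/
/-- For every p̄ > 0, ℝ^ℓ_+ = ⋂_{p ≥ p̄} C^p and ℝ^ℓ_+ \ {0} = ⋂_{p ≥ p̄} int C^p. -/
theorem stmt_11 (ℓ : ℕ) (hℓ : 2 ≤ ℓ) (p₀ : ℝ) (hp₀ : 0 < p₀)
    (C : ℝ → Set (Fin ℓ → ℝ))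
    (hC : ∀ q : ℝ, C q =
      {y : Fin ℓ → ℝ | ∀ i : Fin ℓ, 0 ≤ q * y i + ∑ j ∈ Finset.univ.erase i, y j}) :
    ({y : Fin ℓ → ℝ | ∀ j, 0 ≤ y j} = ⋂ p, ⋂ (_ : p₀ ≤ p), C p) ∧
    ({y : Fin ℓ → ℝ | ∀ j, 0 ≤ y j} \ {0} = ⋂ p, ⋂ (_ : p₀ ≤ p), interior (C p)) := by
  have h1 : ({y : Fin ℓ → ℝ | ∀ j, 0 ≤ y j} = ⋂ p, ⋂ (_ : p₀ ≤ p), C p) := by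
    ext y
    simp only [Set.mem_iInter, Set.mem_setOf_eq, hC]
    constructor
    · intro hy p hp i
      have hp' : 0 < p := lt_of_lt_of_le hp₀ hp
      have hs : 0 ≤ ∑ j ∈ Finset.univ.erase i, y j :=
        Finset.sum_nonneg fun j _ => hy j
      nlinarith [hy i]
    · intro h i
      by_contra hneg
      push_neg at hneg
      set s := ∑ j ∈ Finset.univ.erase i, y j with hs
      have hyi : 0 < -y i := by linarith
      set p := max p₀ ((s + 1) / (-y i)) with hpdef
      have hp : p₀ ≤ p := le_max_left _ _
      have h2 : (s + 1) / (-y i) ≤ p := le_max_right _ _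
      have h3 : s + 1 ≤ p * (-y i) := (div_le_iff₀ hyi).mp h2
      have h4 := h p hp i
      nlinarith
  refine ⟨h1, ?_⟩
  ext y
  simp only [Set.mem_diff, Set.mem_iInter, Set.mem_setOf_eq, Set.mem_singleton_iff]
  constructor
  · rintro ⟨hy, hy0⟩ p hp
    have hp' : 0 < p := lt_of_lt_of_le hp₀ hp
    have hopen : IsOpen {z : Fin ℓ → ℝ |
        ∀ i, 0 < p * z i + ∑ j ∈ Finset.univ.erase i, z j} := by
      rw [Set.setOf_forall]
      apply isOpen_iInter_of_finite
      intro i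
      exact isOpen_lt continuous_const
        ((continuous_const.mul (continuous_apply i)).add
          (continuous_finset_sum _ fun j _ => continuous_apply j))
    have hsub : {z : Fin ℓ → ℝ |
        ∀ i, 0 < p * z i + ∑ j ∈ Finset.univ.erase i, z j} ⊆ C p := by
      rw [hC]; intro z hz i; exact (hz i).le
    apply interior_maximal hsub hopen
    intro i
    obtain ⟨k, hk⟩ : ∃ k, 0 < y k := by
      by_contra hcon; push_neg at hcon
      exact hy0 (funext fun j => le_antisymm (hcon j) (hy j))
    by_cases hki : k = i
    · have hs : 0 ≤ ∑ j ∈ Finset.univ.erase i, y j :=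
        Finset.sum_nonneg fun j _ => hy j
      subst hki; nlinarith
    · have hmem : k ∈ Finset.univ.erase i := Finset.mem_erase.mpr ⟨hki, Finset.mem_univ k⟩
      have hs : y k ≤ ∑ j ∈ Finset.univ.erase i, y j :=
        Finset.single_le_sum (fun j _ => hy j) hmem
      nlinarith [mul_nonneg hp'.le (hy i)]
  · intro h
    have hmemC : y ∈ ⋂ p, ⋂ (_ : p₀ ≤ p), C p :=
      Set.mem_iInter.mpr fun p => Set.mem_iInter.mpr fun hp => interior_subset (h p hp)
    rw [← h1] at hmemC
    refine ⟨hmemC, ?_⟩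
    intro hy0
    have h0 : (0 : Fin ℓ → ℝ) ∈ interior (C p₀) := hy0 ▸ h p₀ le_rfl
    obtain ⟨ε, hε, hball⟩ := Metric.mem_nhds_iff.mp (mem_interior_iff_mem_nhds.mp h0)
    set z : Fin ℓ → ℝ := fun _ => -(ε / 2) with hz
    have hzball : z ∈ Metric.ball (0 : Fin ℓ → ℝ) ε := by
      rw [Metric.mem_ball, dist_pi_lt_iff hε]
      intro i
      simp only [hz, Pi.zero_apply, Real.dist_eq]
      rw [sub_zero, abs_neg, abs_of_pos (by linarith)]
      linarith
    have hzC := hball hzball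
    rw [hC] at hzC
    have hi : 0 < ℓ := by omega
    have hcond := hzC ⟨0, hi⟩
    have hsum : ∑ j ∈ Finset.univ.erase (⟨0, hi⟩ : Fin ℓ), z j ≤ 0 :=
      Finset.sum_nonpos fun j _ => by simp [hz]; linarith
    have : p₀ * z ⟨0, hi⟩ < 0 := by
      simp only [hz]
      nlinarith
    linarith
end

section
/- For every p > 0 there exists K > 0 such that D^{K̃} ⊆ C^p for all K̃ ≥ K; one may take any K > max((ℓ−1)/p, p+ℓ−2). -/
/-- For every p > 0 there is K > 0 with D^K̃ ⊆ C^p for all K̃ ≥ K;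
one may take any K > max((ℓ−1)/p, p+ℓ−2). -/
theorem stmt_12 (ℓ : ℕ) (hℓ : 2 ≤ ℓ) (p : ℝ) (hp : 0 < p)
    (K : ℝ) (hK : max (((ℓ : ℝ) - 1) / p) (p + (ℓ : ℝ) - 2) < K) :
    0 < K ∧ ∀ K' : ℝ, K ≤ K' →
      {y : Fin ℓ → ℝ | ∃ i : Fin ℓ, 0 < y i ∧ ∀ j, j ≠ i → 0 < y i + K' * y j} ⊆
        {y : Fin ℓ → ℝ | ∀ i : Fin ℓ, 0 ≤ p * y i + ∑ j ∈ Finset.univ.erase i, y j} := by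
  have hℓ2 : (2:ℝ) ≤ (ℓ:ℝ) := by exact_mod_cast hℓ
  have h1 : (0:ℝ) < ((ℓ:ℝ) - 1) / p := div_pos (by linarith) hp
  have hK0 : 0 < K := h1.trans (lt_of_le_of_lt (le_max_left _ _) hK)
  refine ⟨hK0, ?_⟩
  intro K' hK' y hy k
  obtain ⟨i, hyi, hij⟩ := hy
  have hK'0 : 0 < K' := hK0.trans_le hK'
  have hd1 : ((ℓ:ℝ) - 1) < K' * p := by
    have := (lt_of_le_of_lt (le_max_left _ _) hK).trans_le hK'
    exact (div_lt_iff₀ hp).mp this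
  have hd2 : p + (ℓ:ℝ) - 2 < K' := (lt_of_le_of_lt (le_max_right _ _) hK).trans_le hK'
  have ha : 0 < y i / K' := div_pos hyi hK'0
  have hbound : ∀ j, j ≠ i → -(y i / K') ≤ y j := by
    intro j hj
    have h2 : -(y i) ≤ K' * y j := by linarith [hij j hj]
    have : (-(y i)) / K' ≤ (K' * y j) / K' :=
      (div_le_div_iff_of_pos_right hK'0).mpr h2
    rwa [neg_div, mul_div_cancel_left₀] at this
    exact ne_of_gt hK'0
  by_cases hk : k = i
  · subst hk
    have hsum : ((Finset.univ.erase k).card : ℝ) * (-(y k / K')) ≤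
        ∑ j ∈ Finset.univ.erase k, y j := by
      rw [← nsmul_eq_mul]
      exact Finset.card_nsmul_le_sum _ _ _
        (fun j hj => hbound j (Finset.ne_of_mem_erase hj))
    have hcard : ((Finset.univ.erase k).card : ℝ) = (ℓ:ℝ) - 1 := by
      rw [Finset.card_erase_of_mem (Finset.mem_univ k), Finset.card_univ, Fintype.card_fin]
      rw [Nat.cast_sub (by omega)]
      simp
    rw [hcard] at hsum
    have key : 0 < (y k / K') * (K' * p - ((ℓ:ℝ) - 1)) := mul_pos ha (by linarith)
    have hyk : y k = (y k / K') * K' := by field_simp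
    nlinarith [hsum, key]
  · have hmem : i ∈ Finset.univ.erase k := Finset.mem_erase.mpr ⟨Ne.symm hk, Finset.mem_univ i⟩
    rw [← Finset.add_sum_erase _ _ hmem]
    have hsum : (((Finset.univ.erase k).erase i).card : ℝ) * (-(y i / K')) ≤
        ∑ j ∈ (Finset.univ.erase k).erase i, y j := by
      rw [← nsmul_eq_mul]
      exact Finset.card_nsmul_le_sum _ _ _
        (fun j hj => hbound j (Finset.ne_of_mem_erase hj))
    have hcard : (((Finset.univ.erase k).erase i).card : ℝ) = (ℓ:ℝ) - 2 := by
      rw [Finset.card_erase_of_mem hmem, Finset.card_erase_of_mem (Finset.mem_univ k),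
        Finset.card_univ, Fintype.card_fin]
      rw [Nat.cast_sub (by omega), Nat.cast_sub (by omega)]
      push_cast; ring
    rw [hcard] at hsum
    have hyk : -(y i / K') ≤ y k := hbound k hk
    have key : 0 < (y i / K') * (K' - p - ((ℓ:ℝ) - 2)) := mul_pos ha (by linarith)
    have hyi' : y i = (y i / K') * K' := by field_simp
    nlinarith [hsum, key, hyk, hp.le]
end

section
/- For every K > 0, C^p \ {0} ⊆ D^K holds with p = ℓK. -/
/-- For every K > 0, C^p \ {0} ⊆ D^K with p = ℓK. -/
theorem stmt_13 (ℓ : ℕ) (hℓ : 2 ≤ ℓ) (K : ℝ) (hK : 0 < K) :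
    {y : Fin ℓ → ℝ | ∀ i : Fin ℓ,
        0 ≤ ((ℓ : ℝ) * K) * y i + ∑ j ∈ Finset.univ.erase i, y j} \ {0} ⊆
      {y : Fin ℓ → ℝ | ∃ i : Fin ℓ, 0 < y i ∧ ∀ j, j ≠ i → 0 < y i + K * y j} := by
  haveI : NeZero ℓ := ⟨by omega⟩
  rintro y ⟨hy, hy0⟩
  simp only [Set.mem_setOf_eq] at hy ⊢
  have hne : (Finset.univ : Finset (Fin ℓ)).Nonempty := Finset.univ_nonempty
  obtain ⟨i, -, hi⟩ := Finset.exists_max_image Finset.univ y hne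
  have hi' : ∀ j, y j ≤ y i := fun j => hi j (Finset.mem_univ j)
  have hℓR : (2 : ℝ) ≤ (ℓ : ℝ) := by exact_mod_cast hℓ
  -- y i > 0
  have hyi : 0 < y i := by
    by_contra h
    push_neg at h
    have hall : ∀ j, y j ≤ 0 := fun j => (hi' j).trans h
    have hsum : ∑ j ∈ Finset.univ.erase i, y j ≤ 0 :=
      Finset.sum_nonpos fun j _ => hall j
    have h1 := hy i
    have hp : (0:ℝ) < (ℓ:ℝ) * K := by positivity
    have hyi0 : y i = 0 := by nlinarith [mul_nonneg hp.le (neg_nonneg.mpr h)]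
    have hsum0 : ∑ j ∈ Finset.univ.erase i, y j = 0 := by
      have : (ℓ:ℝ) * K * y i = 0 := by rw [hyi0, mul_zero]
      linarith
    have hzero : ∀ j ∈ Finset.univ.erase i, y j = 0 :=
      (Finset.sum_eq_zero_iff_of_nonpos (fun j _ => hall j)).mp hsum0
    apply hy0
    funext j
    by_cases hj : j = i
    · simp [hj, hyi0]
    · exact hzero j (Finset.mem_erase.mpr ⟨hj, Finset.mem_univ j⟩)
  refine ⟨i, hyi, fun j hj => ?_⟩
  rcases le_or_gt 0 (y j) with h | h
  · nlinarith
  · have hcard : (Finset.univ.erase j).card = ℓ - 1 := by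
      simp [Finset.card_erase_of_mem]
    have hsum : ∑ k ∈ Finset.univ.erase j, y k ≤ ((ℓ : ℝ) - 1) * y i := by
      calc ∑ k ∈ Finset.univ.erase j, y k ≤ ∑ _k ∈ Finset.univ.erase j, y i :=
            Finset.sum_le_sum fun k _ => hi' k
        _ = ((ℓ : ℝ) - 1) * y i := by
            rw [Finset.sum_const, hcard, nsmul_eq_mul]
            congr 1
            have : (1 : ℝ) ≤ (ℓ : ℝ) := by linarith
            push_cast [Nat.cast_sub (by omega : 1 ≤ ℓ)]
            ring
    have h2 := hy j
    nlinarith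
end

section
/- For every s ∈ int ℝ^ℓ_+ and every m > 1, one has C(s/m) \ {0} ⊆ D^K for K = (m−1)/(Σ_{i=1}^ℓ s_i), where C(s) := {y ∈ ℝ^ℓ : y_i + sᵀy ≥ 0 for all i}. -/
/-- For s with positive components and m > 1, C(s/m) \ {0} ⊆ D^K for
K = (m−1)/(∑ᵢ sᵢ). -/
theorem stmt_14 (ℓ : ℕ) (hℓ : 2 ≤ ℓ) (s : Fin ℓ → ℝ) (hs : ∀ i, 0 < s i)
    (m : ℝ) (hm : 1 < m) (K : ℝ) (hK : K = (m - 1) / ∑ i, s i) :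
    {y : Fin ℓ → ℝ | ∀ i : Fin ℓ, 0 ≤ y i + ∑ j, (s j / m) * y j} \ {0} ⊆
      {y : Fin ℓ → ℝ | ∃ i : Fin ℓ, 0 < y i ∧ ∀ j, j ≠ i → 0 < y i + K * y j} := by
  have hm0 : (0:ℝ) < m := lt_trans one_pos hm
  have hS : (0:ℝ) < ∑ i, s i :=
    Finset.sum_pos (fun i _ => hs i) ⟨⟨0, by omega⟩, Finset.mem_univ _⟩
  have hKpos : 0 < K := by
    rw [hK]; exact div_pos (by linarith) hS
  have hKS : K * ∑ i, s i = m - 1 := by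
    rw [hK]; field_simp
  rintro y ⟨hy, hy0⟩
  simp only [Set.mem_setOf_eq] at hy ⊢
  -- T is the common sum
  set T : ℝ := ∑ j, (s j / m) * y j with hT
  -- pick i maximizing y
  have hne : (Finset.univ : Finset (Fin ℓ)).Nonempty := ⟨⟨0, by omega⟩, Finset.mem_univ _⟩
  obtain ⟨i, -, hi⟩ := Finset.exists_max_image Finset.univ y hne
  have himax : ∀ j, y j ≤ y i := fun j => hi j (Finset.mem_univ j)
  -- y i > 0
  have hyi : 0 < y i := by
    by_contra h
    push_neg at h
    have hTle : T ≤ 0 := by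
      rw [hT]
      apply Finset.sum_nonpos
      intro j _
      have := le_trans (himax j) h
      exact mul_nonpos_of_nonneg_of_nonpos (le_of_lt (div_pos (hs j) hm0)) this
    apply hy0
    funext j
    have h1 : 0 ≤ y j + T := hy j
    have h2 : y j ≤ 0 := le_trans (himax j) h
    have h3 : 0 ≤ y j := by linarith
    exact le_antisymm h2 h3
  refine ⟨i, hyi, fun j _ => ?_⟩
  rcases le_or_gt 0 (y j) with hj | hj
  · nlinarith
  · -- T ≥ -y j and T ≤ S * y i / m
    have h1 : 0 ≤ y j + T := hy j
    have h2 : T ≤ (∑ k, s k) * y i / m := by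
      rw [hT]
      have : ∀ k ∈ Finset.univ, (s k / m) * y k ≤ (s k / m) * y i := by
        intro k _
        exact mul_le_mul_of_nonneg_left (himax k) (le_of_lt (div_pos (hs k) hm0))
      calc ∑ k, (s k / m) * y k ≤ ∑ k, (s k / m) * y i := Finset.sum_le_sum this
        _ = (∑ k, s k) * y i / m := by simp_rw [div_mul_eq_mul_div, ← Finset.sum_div, ← Finset.sum_mul]
    -- y j ≥ - S y i / m
    have h3 : -((∑ k, s k) * y i / m) ≤ y j := by linarith
    have h4 : K * (-((∑ k, s k) * y i / m)) ≤ K * y j :=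
      mul_le_mul_of_nonneg_left h3 (le_of_lt hKpos)
    have h5 : K * (-((∑ k, s k) * y i / m)) = -((m - 1) * y i / m) := by
      rw [← hKS]; ring
    have h6 : 0 < y i - (m - 1) * y i / m := by
      have : y i - (m - 1) * y i / m = y i / m := by field_simp; ring
      rw [this]; exact div_pos hyi hm0
    linarith
end

section
/- For every w ∈ int ℝ^ℓ_+ and every ε > 0, one has C_w(ε) \ {0} ⊆ D^K for K = (min_i w_i)/(2ε·Σ_j w_j), where C_w(ε) := {y ∈ ℝ^ℓ : w_i y_i + ε·Σ_j w_j y_j ≥ 0 for all i}. -/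
/-- For w with positive components and ε > 0, C_w(ε) \ {0} ⊆ D^K for
K = (minᵢ wᵢ)/(2ε·∑ⱼ wⱼ). -/
theorem stmt_15 (ℓ : ℕ) (hℓ : 2 ≤ ℓ) (w : Fin ℓ → ℝ) (hw : ∀ i, 0 < w i)
    (ε : ℝ) (hε : 0 < ε) (K : ℝ)
    (hK : K = (Finset.univ.inf' (Finset.univ_nonempty_iff.mpr ⟨⟨0, by omega⟩⟩) w) /
        (2 * ε * ∑ j, w j)) :
    {y : Fin ℓ → ℝ | ∀ i : Fin ℓ, 0 ≤ w i * y i + ε * ∑ j, w j * y j} \ {0} ⊆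
      {y : Fin ℓ → ℝ | ∃ i : Fin ℓ, 0 < y i ∧ ∀ j, j ≠ i → 0 < y i + K * y j} := by
  intro y ⟨hC, hne⟩
  simp only [Set.mem_setOf_eq] at hC ⊢
  have hne' : y ≠ 0 := hne
  set m := (Finset.univ.inf' (Finset.univ_nonempty_iff.mpr ⟨⟨0, by omega⟩⟩) w) with hm
  set S := ∑ j, w j * y j with hSdef
  set W := ∑ j, w j with hWdef
  have hW : 0 < W := Finset.sum_pos (fun i _ => hw i) ⟨⟨0, by omega⟩, Finset.mem_univ _⟩
  have hmle : ∀ j, m ≤ w j := fun j => Finset.inf'_le _ (Finset.mem_univ j)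
  have hmpos : 0 < m := by
    obtain ⟨j, -, hj⟩ := Finset.exists_mem_eq_inf' (Finset.univ_nonempty_iff.mpr ⟨⟨0, by omega⟩⟩) w
    rw [hm, hj]; exact hw j
  obtain ⟨i, -, hi⟩ := Finset.exists_max_image Finset.univ y ⟨⟨0, by omega⟩, Finset.mem_univ _⟩
  have hi' : ∀ j, y j ≤ y i := fun j => hi j (Finset.mem_univ j)
  have hKpos : 0 < K := by rw [hK]; positivity
  have hyi : 0 < y i := by
    by_contra h
    push_neg at h
    have hall : ∀ j, y j ≤ 0 := fun j => (hi' j).trans h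
    have hS0 : S ≤ 0 := Finset.sum_nonpos fun j _ =>
      mul_nonpos_of_nonneg_of_nonpos (hw j).le (hall j)
    have hz : ∀ j, y j = 0 := by
      intro j
      have := hC j
      nlinarith [hw j, hall j, mul_nonpos_of_nonneg_of_nonpos (hw j).le (hall j)]
    exact hne' (funext fun j => hz j)
  refine ⟨i, hyi, fun j hj => ?_⟩
  rcases le_or_gt 0 (y j) with hyj | hyj
  · nlinarith
  · have hCj := hC j
    have hSpos : 0 < S := by nlinarith [hw j, mul_neg_of_pos_of_neg (hw j) hyj]
    have hSW : S ≤ W * y i := by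
      rw [hWdef, Finset.sum_mul]
      exact Finset.sum_le_sum fun k _ => mul_le_mul_of_nonneg_left (hi' k) (hw k).le
    have hmyj : -(ε * S) ≤ m * y j := by nlinarith [hmle j]
    have hKy : -(y i) / 2 ≤ K * y j := by
      rw [hK, div_mul_eq_mul_div, div_le_div_iff₀ two_pos (by positivity)]
      nlinarith
    linarith
end

section
/- y⁰ ∈ F is Geoffrion-properly efficient if and only if there exists p > 0 with y⁰ ∈ Min(F, C^p); moreover for 1 ≤ p̄ ≤ p one has Min(F, C^{p̄}) ⊆ Min(F, C^p). -/
lemma aux1 {ℓ : ℕ} (hℓ : 2 ≤ ℓ) {p : ℝ} (hp : 0 < p) (z : Fin ℓ → ℝ) (i : Fin ℓ)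
    (hzi : 0 < z i) (h : ∃ k, (p - 1) * z k + ∑ j, z j < 0) :
    ∃ j, j ≠ i ∧ z i ≤ (((ℓ:ℝ) - 1) * (p + p⁻¹)) * (-(z j)) := by
  have h2R : (2:ℝ) ≤ (ℓ:ℝ) := by exact_mod_cast hℓ
  have hpinv : 0 < p⁻¹ := inv_pos.2 hp
  have hpp : p * p⁻¹ = 1 := mul_inv_cancel₀ hp.ne'
  obtain ⟨k, hk⟩ := h
  have hne : (Finset.univ.erase i).Nonempty := by
    rw [← Finset.card_pos, Finset.card_erase_of_mem (Finset.mem_univ i), Finset.card_univ,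
      Fintype.card_fin]
    omega
  obtain ⟨j, hjmem, hjmin⟩ := Finset.exists_min_image (Finset.univ.erase i) z hne
  have hji : j ≠ i := (Finset.mem_erase.1 hjmem).1
  refine ⟨j, hji, ?_⟩
  by_cases hki : k = i
  · subst hki
    have hsum : ∑ x ∈ Finset.univ.erase k, z x + z k = ∑ x, z x :=
      Finset.sum_erase_add _ _ (Finset.mem_univ k)
    have hcard1 : ((Finset.univ.erase k).card : ℝ) = (ℓ:ℝ) - 1 := by
      rw [Finset.card_erase_of_mem (Finset.mem_univ k), Finset.card_univ, Fintype.card_fin,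
        Nat.cast_sub (by omega), Nat.cast_one]
    have hlow : ((ℓ:ℝ) - 1) * z j ≤ ∑ x ∈ Finset.univ.erase k, z x := by
      have h2 := Finset.card_nsmul_le_sum (Finset.univ.erase k) z (z j)
        (fun x hx => hjmin x hx)
      rwa [nsmul_eq_mul, hcard1] at h2
    have hkey : p * z k + ((ℓ:ℝ) - 1) * z j < 0 := by linarith
    have hzj : z j < 0 := by nlinarith
    have hc : z k ≤ (((ℓ:ℝ) - 1) * p⁻¹) * (-(z j)) := by
      nlinarith [mul_lt_mul_of_pos_left hkey hpinv]
    have hcoef : (((ℓ:ℝ) - 1) * p⁻¹) * (-(z j)) ≤ (((ℓ:ℝ) - 1) * (p + p⁻¹)) * (-(z j)) := by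
      nlinarith [mul_nonneg (mul_nonneg (by linarith : (0:ℝ) ≤ (ℓ:ℝ) - 1) hp.le)
        (by linarith : (0:ℝ) ≤ -(z j))]
    linarith
  · have hkmem : k ∈ Finset.univ.erase i := Finset.mem_erase.2 ⟨hki, Finset.mem_univ k⟩
    have hzk : z j ≤ z k := hjmin k hkmem
    have himem : i ∈ Finset.univ.erase k :=
      Finset.mem_erase.2 ⟨fun h => hki h.symm, Finset.mem_univ i⟩
    have hsum : ∑ x ∈ Finset.univ.erase k, z x + z k = ∑ x, z x :=
      Finset.sum_erase_add _ _ (Finset.mem_univ k)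
    have hsum2 : z i + ∑ x ∈ (Finset.univ.erase k).erase i, z x = ∑ x ∈ Finset.univ.erase k, z x :=
      Finset.add_sum_erase _ z himem
    have hcard2 : (((Finset.univ.erase k).erase i).card : ℝ) = (ℓ:ℝ) - 2 := by
      rw [Finset.card_erase_of_mem himem, Finset.card_erase_of_mem (Finset.mem_univ k),
        Finset.card_univ, Fintype.card_fin, Nat.cast_sub (by omega), Nat.cast_sub (by omega),
        Nat.cast_one]
      ring
    have hlow : ((ℓ:ℝ) - 2) * z j ≤ ∑ x ∈ (Finset.univ.erase k).erase i, z x := by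
      have h2 := Finset.card_nsmul_le_sum ((Finset.univ.erase k).erase i) z (z j)
        (fun x hx => hjmin x (Finset.mem_erase.2 ⟨(Finset.mem_erase.1 hx).1, Finset.mem_univ x⟩))
      rwa [nsmul_eq_mul, hcard2] at h2
    have hkey : p * z j + z i + ((ℓ:ℝ) - 2) * z j < 0 := by
      nlinarith [mul_le_mul_of_nonneg_left hzk hp.le]
    have hzj : z j < 0 := by
      by_contra hc
      push_neg at hc
      have h1 : 0 ≤ p * z j := mul_nonneg hp.le hc
      have h2 : 0 ≤ ((ℓ:ℝ) - 2) * z j := mul_nonneg (by linarith) hc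
      linarith
    have hc : z i < (p + (ℓ:ℝ) - 2) * (-(z j)) := by nlinarith
    have hcoef : p + (ℓ:ℝ) - 2 ≤ ((ℓ:ℝ) - 1) * (p + p⁻¹) := by
      have hq : 0 ≤ p * (((ℓ:ℝ) - 1) * (p + p⁻¹) - (p + (ℓ:ℝ) - 2)) := by
        nlinarith [mul_nonneg (by linarith : (0:ℝ) ≤ (ℓ:ℝ) - 2) (sq_nonneg (p - 1))]
      by_contra hcon
      push_neg at hcon
      nlinarith
    have h3 := mul_le_mul_of_nonneg_right hcoef (by linarith : (0:ℝ) ≤ -(z j))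
    nlinarith

/-- Geoffrion proper efficiency iff efficiency w.r.t. some C^p, and
Min(F,C^p̄) ⊆ Min(F,C^p) for 1 ≤ p̄ ≤ p. -/
theorem stmt_16 (ℓ : ℕ) (hℓ : 2 ≤ ℓ) (F : Set (Fin ℓ → ℝ))
    (C : ℝ → Set (Fin ℓ → ℝ))
    (hC : ∀ q : ℝ, C q =
      {y : Fin ℓ → ℝ | ∀ i : Fin ℓ, 0 ≤ q * y i + ∑ j ∈ Finset.univ.erase i, y j})
    (Min : Set (Fin ℓ → ℝ) → Set (Fin ℓ → ℝ) → Set (Fin ℓ → ℝ))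
    (hMin : ∀ (A D : Set (Fin ℓ → ℝ)),
      Min A D = {y0 ∈ A | A ∩ {y | y0 - y ∈ D} ⊆ {y0}}) :
    (∀ y0 : Fin ℓ → ℝ, y0 ∈ F →
      ((∃ K : ℝ, 0 < K ∧ ∀ y ∈ F, ∀ i : Fin ℓ, y i < y0 i →
          ∃ j, j ≠ i ∧ y0 i - y i ≤ K * (y j - y0 j)) ↔
        ∃ p : ℝ, 0 < p ∧ y0 ∈ Min F (C p))) ∧
    ∀ p' p : ℝ, 1 ≤ p' → p' ≤ p → Min F (C p') ⊆ Min F (C p) := by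
  have h2R : (2:ℝ) ≤ (ℓ:ℝ) := by exact_mod_cast hℓ
  have hCmem : ∀ (q : ℝ) (z : Fin ℓ → ℝ),
      z ∈ C q ↔ ∀ i, 0 ≤ (q - 1) * z i + ∑ j, z j := by
    intro q z
    have he : ∀ i : Fin ℓ, ∑ j ∈ Finset.univ.erase i, z j = (∑ j, z j) - z i := fun i => by
      have h := Finset.sum_erase_add Finset.univ z (Finset.mem_univ i); linarith
    rw [hC q]
    simp only [Set.mem_setOf_eq]
    constructor
    · intro h i
      have h' := h i
      rw [he i] at h'
      linarith
    · intro h i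
      rw [he i]
      have h' := h i
      linarith
  have hMinmem : ∀ (p : ℝ) (y0 : Fin ℓ → ℝ),
      y0 ∈ Min F (C p) ↔ y0 ∈ F ∧ ∀ y ∈ F, y0 - y ∈ C p → y = y0 := by
    intro p y0
    rw [hMin]
    simp only [Set.mem_sep_iff, Set.subset_singleton_iff, Set.mem_inter_iff, Set.mem_setOf_eq]
    constructor
    · rintro ⟨h1, h2⟩
      exact ⟨h1, fun y hyF hyC => h2 y ⟨hyF, hyC⟩⟩
    · rintro ⟨h1, h2⟩
      exact ⟨h1, fun y ⟨hyF, hyC⟩ => h2 y hyF hyC⟩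
  constructor
  · intro y0 hy0
    constructor
    · rintro ⟨K, hK, hG⟩
      refine ⟨K * ((ℓ:ℝ) - 1) + 1, by nlinarith, ?_⟩
      rw [hMinmem]
      refine ⟨hy0, fun y hyF hyC => ?_⟩
      by_contra hne
      rw [hCmem] at hyC
      simp only [Pi.sub_apply] at hyC
      set p : ℝ := K * ((ℓ:ℝ) - 1) + 1 with hpdef
      -- there is an index with y0 i > y i
      have hex : ∃ i, 0 < y0 i - y i := by
        by_contra hcon
        push_neg at hcon
        obtain ⟨i0, hi0⟩ := Function.ne_iff.mp hne
        have hi0' : y0 i0 - y i0 < 0 := by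
          rcases lt_or_gt_of_ne hi0 with h | h
          · linarith [hcon i0]
          · linarith
        have hS : ∑ j, (y0 j - y j) ≤ 0 :=
          Finset.sum_nonpos (fun j _ => by linarith [hcon j])
        have h1 := hyC i0
        have hp1 : (0:ℝ) < p - 1 := by
          rw [hpdef]; nlinarith
        nlinarith
      obtain ⟨ip, hip⟩ := hex
      obtain ⟨im, _, hmax⟩ := Finset.exists_max_image Finset.univ (fun i => y0 i - y i)
        ⟨ip, Finset.mem_univ ip⟩
      have him : 0 < y0 im - y im := lt_of_lt_of_le hip (hmax ip (Finset.mem_univ ip))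
      obtain ⟨j, hji, hineq⟩ := hG y hyF im (by linarith)
      -- cone condition at j
      have hj := hyC j
      have hsum : ∑ x ∈ Finset.univ.erase j, (y0 x - y x) + (y0 j - y j)
          = ∑ x, (y0 x - y x) := Finset.sum_erase_add _ _ (Finset.mem_univ j)
      have hcard1 : ((Finset.univ.erase j).card : ℝ) = (ℓ:ℝ) - 1 := by
        rw [Finset.card_erase_of_mem (Finset.mem_univ j), Finset.card_univ, Fintype.card_fin,
          Nat.cast_sub (by omega), Nat.cast_one]
      have hupp : ∑ x ∈ Finset.univ.erase j, (y0 x - y x) ≤ ((ℓ:ℝ) - 1) * (y0 im - y im) := by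
        have h2 := Finset.sum_le_card_nsmul (Finset.univ.erase j) (fun x => y0 x - y x)
          (y0 im - y im) (fun x _ => hmax x (Finset.mem_univ x))
        rwa [nsmul_eq_mul, hcard1] at h2
      -- combine
      have hKz : K * (y j - y0 j) ≥ y0 im - y im := hineq
      have hzj : y j - y0 j > 0 := by nlinarith
      have hp0 : p = K * ((ℓ:ℝ) - 1) + 1 := hpdef
      nlinarith [mul_le_mul_of_nonneg_left hKz (by linarith : (0:ℝ) ≤ (ℓ:ℝ) - 1)]
    · rintro ⟨p, hp, hyMin⟩
      rw [hMinmem] at hyMin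
      refine ⟨((ℓ:ℝ) - 1) * (p + p⁻¹),
        mul_pos (by linarith) (by have := inv_pos.2 hp; linarith), fun y hyF i hyi => ?_⟩
      have hnc : y0 - y ∉ C p := by
        intro hc
        have := hyMin.2 y hyF hc
        rw [this] at hyi
        exact lt_irrefl _ hyi
      rw [hCmem] at hnc
      push_neg at hnc
      obtain ⟨j, hj, hb⟩ := aux1 hℓ hp (y0 - y) i (by simpa [Pi.sub_apply] using sub_pos.2 hyi)
        (by obtain ⟨k, hk⟩ := hnc; exact ⟨k, hk⟩)
      refine ⟨j, hj, ?_⟩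
      simp only [Pi.sub_apply] at hb
      rw [show y j - y0 j = -(y0 j - y j) by ring]
      exact hb
  · intro p' p hp' hpp y0 hy0
    rw [hMinmem] at hy0 ⊢
    refine ⟨hy0.1, fun y hyF hyC => hy0.2 y hyF ?_⟩
    rw [hCmem] at hyC ⊢
    have hS : 0 ≤ ∑ j, (y0 - y) j := by
      by_contra hcon
      push_neg at hcon
      have h := Finset.sum_nonneg (fun i (_ : i ∈ Finset.univ) => hyC i)
      rw [Finset.sum_add_distrib, ← Finset.mul_sum, Finset.sum_const, Finset.card_univ,
        Fintype.card_fin, nsmul_eq_mul] at h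
      have h1 : (p - 1) * ∑ j, (y0 - y) j ≤ 0 :=
        mul_nonpos_of_nonneg_of_nonpos (by linarith) hcon.le
      have h2 : (ℓ:ℝ) * ∑ j, (y0 - y) j < 0 :=
        mul_neg_of_pos_of_neg (by linarith) hcon
      linarith
    intro i
    have h := hyC i
    rcases le_or_gt 0 ((y0 - y) i) with h0 | h0
    · have : 0 ≤ (p' - 1) * (y0 - y) i := mul_nonneg (by linarith) h0
      linarith
    · have : (p - 1) * (y0 - y) i ≤ (p' - 1) * (y0 - y) i :=
        mul_le_mul_of_nonpos_right (by linarith) h0.le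
      linarith
end

section
/- For the set F := {(y₁, y₂) ∈ ℝ² : y₁ < 0, y₂ = 1/y₁} + ℝ²_+, there is no convex cone H ⊆ ℝ² with ℝ²_+ \ {0} ⊆ int H and a point y⁰ ∈ F with F ∩ (y⁰ − H) ⊆ {y⁰}; i.e., the Henig properly efficient point set of F with respect to ℝ²_+ is empty. -/
/-- For F = {(y₁,y₂) : y₁ < 0, y₂ = 1/y₁} + ℝ²₊, the Henig properly efficient
point set of F w.r.t. ℝ²₊ is empty. -/
theorem stmt_19
    (F : Set (ℝ × ℝ))
    (hF : F = {y : ℝ × ℝ | ∃ u : ℝ × ℝ, u.1 < 0 ∧ u.2 = 1 / u.1 ∧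
        u.1 ≤ y.1 ∧ u.2 ≤ y.2}) :
    ¬ ∃ y0 ∈ F, ∃ H : Set (ℝ × ℝ), Convex ℝ H ∧
        (∀ l : ℝ, 0 ≤ l → ∀ c ∈ H, l • c ∈ H) ∧
        ({y : ℝ × ℝ | 0 ≤ y.1 ∧ 0 ≤ y.2} \ {0}) ⊆ interior H ∧
        F ∩ {y | y0 - y ∈ H} ⊆ {y0} := by
  rintro ⟨y0, hy0, H, hconv, hcone, hsub, hmin⟩
  -- H is closed under addition
  have hadd : ∀ x z : ℝ × ℝ, x ∈ H → z ∈ H → x + z ∈ H := by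
    intro x z hx hz
    have hmid : (1/2 : ℝ) • x + (1/2 : ℝ) • z ∈ H :=
      hconv hx hz (by norm_num) (by norm_num) (by norm_num)
    have h2 := hcone 2 (by norm_num) _ hmid
    have : (2:ℝ) • ((1/2 : ℝ) • x + (1/2 : ℝ) • z) = x + z := by
      module
    rwa [this] at h2
  -- (0,1) is in the interior of H
  have h01 : ((0:ℝ), (1:ℝ)) ∈ interior H := by
    apply hsub
    constructor
    · exact ⟨le_refl 0, zero_le_one⟩
    · simp [Prod.ext_iff]
  obtain ⟨ε, hε, hball⟩ := Metric.isOpen_iff.mp isOpen_interior _ h01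
  set δ : ℝ := ε / 2 with hδdef
  have hδ : 0 < δ := by positivity
  -- the direction d = (-δ, 1) lies in H
  have hd : ((-δ, 1) : ℝ × ℝ) ∈ H := by
    apply interior_subset
    apply hball
    have hdist : dist ((-δ, 1) : ℝ × ℝ) ((0, 1) : ℝ × ℝ) = δ := by
      rw [Prod.dist_eq, Real.dist_eq, Real.dist_eq]
      rw [show -δ - 0 = -δ by ring, show (1:ℝ) - 1 = 0 by ring]
      rw [abs_neg, abs_of_pos hδ, abs_zero]
      exact max_eq_left hδ.le
    rw [Metric.mem_ball, hdist]
    linarith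
  set c : ℝ := max 0 (-y0.1 / δ) with hcdef
  have hc0 : 0 ≤ c := le_max_left _ _
  have hc1 : -y0.1 ≤ c * δ := by
    have : -y0.1 / δ ≤ c := le_max_right _ _
    calc -y0.1 = (-y0.1 / δ) * δ := by field_simp
    _ ≤ c * δ := by nlinarith
  set b : ℝ := |y0.2| + c + 2 with hbdef
  have hb : 0 < b := by
    have := abs_nonneg y0.2
    simp only [hbdef]; linarith
  set a' : ℝ := -1 / b with hadef
  have ha' : a' < 0 := by
    rw [hadef]
    exact div_neg_of_neg_of_pos (by norm_num) hb
  have hinv : 1 / a' = -b := by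
    rw [hadef]
    field_simp
  -- the competing point y on the hyperbola
  set y : ℝ × ℝ := (a', 1 / a') with hydef
  have hyF : y ∈ F := by
    rw [hF]
    exact ⟨(a', 1 / a'), ha', rfl, le_refl _, le_refl _⟩
  -- w := y0 - y - c • d  lies in ℝ²₊ \ {0}
  set w : ℝ × ℝ := (y0.1 - a' + c * δ, y0.2 + b - c) with hwdef
  have hw2 : 2 ≤ w.2 := by
    have h1 := abs_nonneg y0.2
    have h2 := neg_abs_le y0.2
    simp only [hwdef, hbdef]
    linarith
  have hwH : w ∈ H := by
    apply interior_subset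
    apply hsub
    constructor
    · constructor
      · show (0:ℝ) ≤ y0.1 - a' + c * δ
        linarith
      · show (0:ℝ) ≤ y0.2 + b - c
        have hw2' : (2:ℝ) ≤ y0.2 + b - c := hw2
        linarith
    · intro hzero
      simp only [Set.mem_singleton_iff, Prod.ext_iff] at hzero
      have h2 : y0.2 + b - c = 0 := by
        have := hzero.2
        simpa using this
      have hw2' : (2:ℝ) ≤ y0.2 + b - c := hw2
      linarith
  have hcdH : c • ((-δ, 1) : ℝ × ℝ) ∈ H := hcone c hc0 _ hd
  have hdiff : y0 - y ∈ H := by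
    have hsum := hadd _ _ hcdH hwH
    have heq : c • ((-δ, 1) : ℝ × ℝ) + w = y0 - y := by
      rw [Prod.ext_iff]
      constructor
      · show c * (-δ) + (y0.1 - a' + c * δ) = y0.1 - a'
        ring
      · show c * 1 + (y0.2 + b - c) = y0.2 - 1 / a'
        rw [hinv]; ring
    rwa [heq] at hsum
  have hyeq : y = y0 := hmin ⟨hyF, hdiff⟩
  have : y.2 = y0.2 := by rw [hyeq]
  rw [hydef] at this
  simp only at this
  rw [hinv] at this
  have h1 := abs_nonneg y0.2
  have h2 := neg_abs_le y0.2
  simp only [hbdef] at this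
  linarith
end
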